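/- arXiv:2201.10762 — 4 statements merged into one kernel-verified Lean document; each statement's English description precedes it below -/
import Mathlib

section
/- Let d ≥ 1, let A₀ ∈ ℝ^{d×d}, let Q ∈ ℂ^{d×d} be invertible and let J ∈ ℂ^{d×d} be in Jordan normal form with A₀ = Q J Q⁻¹ (viewing A₀ as a complex matrix). Let κ'(A₀) denote the smallest real part of the eigenvalues of A₀, and let κ̲(QQ^H) and κ̄(QQ^H) denote the smallest and largest eigenvalues of the Hermitian positive definite matrix QQ^H (Q^H the conjugate transpose of Q). Then for every t ≥ 0: ‖exp(−tA₀)‖ ≤ √(κ̄(QQ^H)/κ̲(QQ^H)) · e^{(1−κ'(A₀))t}. -/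
/-!
Split `J = D + N` into its diagonal `D` and nilpotent part `N`. They commute, so
`exp (-tJ) = exp (-tD) exp (-tN)`, where `‖exp (-tD)‖ ≤ e^{-κ' t}`, and `‖exp (-tN)‖ ≤ e^t`
because `N` is a diagonal matrix with entries in `{0, 1}` times the cyclic-shift permutation
matrix, whence `‖N‖ ≤ 1`. Conjugating by `Q` costs a factor `‖Q‖ ‖Q⁻¹‖`, and the spectral
theorem for `QQᴴ` gives `‖Q‖² = ‖QQᴴ‖ ≤ κ̄` and `‖Q⁻¹‖² = ‖(QQᴴ)⁻¹‖ ≤ 1/κ̲`. The real operator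
norm of a real matrix is at most that of its complexification.
-/

open scoped Matrix

/-- A complex `d × d` matrix is in Jordan normal form if it vanishes off the diagonal and
superdiagonal, the superdiagonal entries are `0` or `1`, and a superdiagonal entry `1` forces
the two adjacent diagonal entries (eigenvalues) to coincide. -/
def IsJordanNF {d : ℕ} (J : Matrix (Fin d) (Fin d) ℂ) : Prop :=
  (∀ i j : Fin d, (j : ℕ) ≠ (i : ℕ) → (j : ℕ) ≠ (i : ℕ) + 1 → J i j = 0) ∧
  (∀ i j : Fin d, (j : ℕ) = (i : ℕ) + 1 → J i j = 0 ∨ J i j = 1) ∧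
  (∀ i j : Fin d, (j : ℕ) = (i : ℕ) + 1 → J i j = 1 → J i i = J j j)

namespace NormedSpace

theorem norm_exp_le_exp_norm {𝕂 𝔸 : Type*} [RCLike 𝕂] [NormedRing 𝔸] [NormedAlgebra 𝕂 𝔸]
    [CompleteSpace 𝔸] (h1 : ‖(1 : 𝔸)‖ ≤ 1) (x : 𝔸) : ‖exp x‖ ≤ Real.exp ‖x‖ := by
  have hpow : ∀ n : ℕ, ‖x ^ n‖ ≤ ‖x‖ ^ n
    | 0 => by simpa using h1
    | n + 1 => norm_pow_le' x n.succ_pos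
  have hterm (n : ℕ) : ‖(n.factorial⁻¹ : 𝕂) • x ^ n‖ ≤ ‖x‖ ^ n / n.factorial := by
    rw [norm_smul, norm_inv, RCLike.norm_natCast, inv_mul_eq_div]
    gcongr
    exact hpow n
  have hsum := norm_expSeries_summable' (𝕂 := 𝕂) x
  rw [exp_eq_tsum 𝕂, Real.exp_eq_exp_ℝ, exp_eq_tsum_div]
  exact (norm_tsum_le_tsum_norm hsum).trans
    (hsum.tsum_le_tsum hterm (Real.summable_pow_div_factorial _))

end NormedSpace

namespace Matrix

-- `map_exp` needs some normed-algebra structure; `exp` itself does not depend on it.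
open scoped Matrix.Norms.Operator in
theorem exp_map_ofReal {n : Type*} [Fintype n] [DecidableEq n] (M : Matrix n n ℝ) :
    NormedSpace.exp (M.map ((↑) : ℝ → ℂ)) = (NormedSpace.exp M).map (↑) :=
  (NormedSpace.map_exp Complex.ofRealHom.mapMatrix
    (continuous_id.matrix_map Complex.continuous_ofReal) M).symm

end Matrix

open scoped Matrix.Norms.L2Operator

namespace Matrix

variable {n 𝕜 : Type*} [Fintype n] [DecidableEq n] [RCLike 𝕜]

theorem l2_opNorm_one_le : ‖(1 : Matrix n n 𝕜)‖ ≤ 1 := by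
  rw [cstar_norm_def, map_one]
  exact ContinuousLinearMap.norm_id_le

theorem l2_opNorm_le_of_apply_eq_zero_of_ne_perm {A : Matrix n n 𝕜} (σ : Equiv.Perm n)
    (hA : ∀ i j, j ≠ σ i → A i j = 0) : ‖A‖ ≤ ‖fun i => A i (σ i)‖ := by
  have hdecomp : A = diagonal (fun i => A i (σ i)) * σ.permMatrix 𝕜 := by
    ext i j
    by_cases h : j = σ i <;> simp [PEquiv.toMatrix_apply, h, hA i j, eq_comm]
  calc ‖A‖ ≤ ‖diagonal (fun i => A i (σ i))‖ * ‖σ.permMatrix 𝕜‖ := by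
        conv_lhs => rw [hdecomp]
        exact l2_opNorm_mul _ _
    _ ≤ ‖fun i => A i (σ i)‖ * 1 := by
        rw [l2_opNorm_diagonal]
        gcongr
        exact permMatrix_l2_opNorm_le σ
    _ = ‖fun i => A i (σ i)‖ := mul_one _

theorem l2_opNorm_exp_diagonal_le {v : n → ℂ} {c : ℝ} (hv : ∀ i, (v i).re ≤ c) :
    ‖NormedSpace.exp (diagonal v)‖ ≤ Real.exp c := by
  rw [exp_diagonal, l2_opNorm_diagonal]
  refine (pi_norm_le_iff_of_nonneg (Real.exp_pos c).le).mpr fun i => ?_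
  rw [Pi.coe_exp, ← Complex.exp_eq_exp_ℂ, Complex.norm_exp]
  exact Real.exp_le_exp.mpr (hv i)

theorem l2_opNorm_le_l2_opNorm_map_ofReal (M : Matrix n n ℝ) :
    ‖M‖ ≤ ‖M.map ((↑) : ℝ → ℂ)‖ := by
  let ofRealVec (x : EuclideanSpace ℝ n) : EuclideanSpace ℂ n := WithLp.toLp 2 fun i => (x i : ℂ)
  have hnorm (x : EuclideanSpace ℝ n) : ‖ofRealVec x‖ = ‖x‖ := by
    simp [ofRealVec, EuclideanSpace.norm_eq]
  have happly (x : EuclideanSpace ℝ n) :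
      toEuclideanCLM (n := n) (𝕜 := ℂ) (M.map (↑)) (ofRealVec x) =
        ofRealVec (toEuclideanCLM (n := n) (𝕜 := ℝ) M x) := by
    ext i
    exact (RingHom.map_mulVec Complex.ofRealHom M x.ofLp i).symm
  rw [cstar_norm_def]
  refine ContinuousLinearMap.opNorm_le_bound _ (norm_nonneg _) fun x => ?_
  calc ‖toEuclideanCLM (n := n) (𝕜 := ℝ) M x‖
        = ‖toEuclideanCLM (n := n) (𝕜 := ℂ) (M.map (↑)) (ofRealVec x)‖ := by
          rw [happly, hnorm]
    _ ≤ ‖M.map ((↑) : ℝ → ℂ)‖ * ‖ofRealVec x‖ := ContinuousLinearMap.le_opNorm _ _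
    _ = ‖M.map ((↑) : ℝ → ℂ)‖ * ‖x‖ := by rw [hnorm]

theorem l2_opNorm_mul_mul_star_of_mem_unitary {U : Matrix n n 𝕜} (hU : U ∈ unitary _)
    (B : Matrix n n 𝕜) : ‖U * B * star U‖ = ‖B‖ := by
  rw [CStarRing.norm_mul_mem_unitary _ (Unitary.star_mem hU), CStarRing.norm_mem_unitary_mul _ hU]

theorem inv_mul_diagonal_mul_star_of_mem_unitary {U : Matrix n n 𝕜} (hU : U ∈ unitary _)
    {v : n → 𝕜} (hv : ∀ i, v i ≠ 0) :
    (U * diagonal v * star U)⁻¹ = U * diagonal v⁻¹ * star U := by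
  refine inv_eq_right_inv ?_
  have hvv : diagonal v * diagonal v⁻¹ = 1 := by
    rw [diagonal_mul_diagonal, ← diagonal_one]
    exact congrArg diagonal (funext fun i => mul_inv_cancel₀ (hv i))
  calc U * diagonal v * star U * (U * diagonal v⁻¹ * star U)
        = U * (diagonal v * (star U * U) * diagonal v⁻¹) * star U := by simp only [mul_assoc]
    _ = 1 := by
        rw [Unitary.star_mul_self_of_mem hU, mul_one, hvv, mul_one, Unitary.mul_star_self_of_mem hU]

namespace IsHermitian

variable {A : Matrix n n 𝕜} (hA : A.IsHermitian)
include hA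

theorem l2_opNorm_le {c : ℝ} (hc : 0 ≤ c) (h : ∀ i, |hA.eigenvalues i| ≤ c) : ‖A‖ ≤ c := by
  rw [hA.spectral_theorem, Unitary.conjStarAlgAut_apply,
    l2_opNorm_mul_mul_star_of_mem_unitary hA.eigenvectorUnitary.2, l2_opNorm_diagonal]
  refine (pi_norm_le_iff_of_nonneg hc).mpr fun i => ?_
  simpa using h i

theorem l2_opNorm_inv_le {c : ℝ} (hc : 0 < c) (h : ∀ i, c ≤ hA.eigenvalues i) :
    ‖A⁻¹‖ ≤ c⁻¹ := by
  have hpos (i : n) : 0 < hA.eigenvalues i := hc.trans_le (h i)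
  rw [hA.spectral_theorem, Unitary.conjStarAlgAut_apply,
    inv_mul_diagonal_mul_star_of_mem_unitary hA.eigenvectorUnitary.2
      (v := RCLike.ofReal ∘ hA.eigenvalues) fun i => RCLike.ofReal_ne_zero.mpr (hpos i).ne',
    l2_opNorm_mul_mul_star_of_mem_unitary hA.eigenvectorUnitary.2, l2_opNorm_diagonal]
  refine (pi_norm_le_iff_of_nonneg (inv_pos.mpr hc).le).mpr fun i => ?_
  rw [Pi.inv_apply, norm_inv, Function.comp_apply, RCLike.norm_ofReal, abs_of_pos (hpos i)]
  exact inv_anti₀ hc (h i)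

end IsHermitian

theorem l2_opNorm_mul_l2_opNorm_inv_le [Nonempty n] {Q : Matrix n n 𝕜}
    (hM : (Q * Qᴴ).IsHermitian) {lo hi : ℝ} (hlo : 0 < lo)
    (hlo_le : ∀ i, lo ≤ hM.eigenvalues i) (hle_hi : ∀ i, hM.eigenvalues i ≤ hi) :
    ‖Q‖ * ‖Q⁻¹‖ ≤ √(hi / lo) := by
  have hi_pos : 0 < hi := hlo.trans_le <| (hlo_le (Classical.arbitrary n)).trans (hle_hi _)
  have hQ : ‖Q‖ ^ 2 ≤ hi := by
    have h := l2_opNorm_conjTranspose_mul_self Qᴴ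
    rw [conjTranspose_conjTranspose, l2_opNorm_conjTranspose] at h
    rw [sq, ← h]
    exact hM.l2_opNorm_le hi_pos.le fun i =>
      abs_le.mpr ⟨by linarith [hlo_le i], hle_hi i⟩
  have hQinv : ‖Q⁻¹‖ ^ 2 ≤ lo⁻¹ := by
    rw [sq, ← l2_opNorm_conjTranspose_mul_self, conjTranspose_nonsing_inv, ← mul_inv_rev]
    exact hM.l2_opNorm_inv_le hlo hlo_le
  rw [Real.le_sqrt (by positivity) (by positivity), mul_pow, div_eq_mul_inv]
  exact mul_le_mul hQ hQinv (sq_nonneg _) hi_pos.le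

open scoped ComplexOrder in
theorem IsHermitian.eigenvalues_pos_of_isUnit {Q : Matrix n n 𝕜} (hQ : IsUnit Q)
    (hM : (Q * Qᴴ).IsHermitian) (i : n) : 0 < hM.eigenvalues i :=
  (PosDef.mul_conjTranspose_self Q (vecMul_injective_of_isUnit hQ)).eigenvalues_pos i

end Matrix

namespace IsJordanNF

open Matrix

variable {d : ℕ} {J : Matrix (Fin d) (Fin d) ℂ} (hJ : IsJordanNF J)
include hJ

theorem commute_diagonal_diag : Commute (diagonal J.diag) J := by
  ext i j
  rw [diagonal_mul, mul_diagonal]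
  by_cases hij : i = j
  · subst hij
    exact mul_comm _ _
  by_cases hsucc : (j : ℕ) = i + 1
  · rcases hJ.2.1 i j hsucc with h0 | h1
    · rw [h0, mul_zero, zero_mul]
    · rw [diag_apply, diag_apply, hJ.2.2 i j hsucc h1]
      exact mul_comm _ _
  · rw [hJ.1 i j (fun h => hij (Fin.ext h.symm)) hsucc, mul_zero, zero_mul]

theorem sub_diagonal_diag_apply_eq_zero {i j : Fin d} (h : (j : ℕ) ≠ i + 1) :
    (J - diagonal J.diag) i j = 0 := by
  by_cases hij : i = j
  · subst hij
    simp
  · rw [Matrix.sub_apply, diagonal_apply_ne _ hij,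
      hJ.1 i j (fun h => hij (Fin.ext h.symm)) h, sub_zero]

theorem norm_sub_diagonal_diag_apply_le_one (i j : Fin d) :
    ‖(J - diagonal J.diag) i j‖ ≤ 1 := by
  by_cases h : (j : ℕ) = i + 1
  · have hij : i ≠ j := fun hij => by subst hij; omega
    rw [Matrix.sub_apply, diagonal_apply_ne _ hij, sub_zero]
    rcases hJ.2.1 i j h with h0 | h1 <;> simp [*]
  · simp [hJ.sub_diagonal_diag_apply_eq_zero h]

theorem l2_opNorm_sub_diagonal_diag_le_one : ‖J - diagonal J.diag‖ ≤ 1 := by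
  refine (l2_opNorm_le_of_apply_eq_zero_of_ne_perm (finRotate d) fun i j hj =>
    hJ.sub_diagonal_diag_apply_eq_zero fun h => hj ?_).trans ?_
  · obtain _ | d := d
    · exact i.elim0
    · have hi : i ≠ Fin.last d := by
        rintro rfl
        have := j.isLt
        simp only [Fin.val_last] at h
        omega
      exact Fin.ext (by rw [coe_finRotate_of_ne_last hi, h])
  · exact (pi_norm_le_iff_of_nonneg zero_le_one).mpr fun i =>
      hJ.norm_sub_diagonal_diag_apply_le_one _ _

theorem l2_opNorm_exp_neg_smul_le {κ t : ℝ} (ht : 0 ≤ t) (hκ : ∀ i, κ ≤ (J i i).re) :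
    ‖NormedSpace.exp (-(t • J))‖ ≤ Real.exp ((1 - κ) * t) := by
  set D := diagonal J.diag
  set N := J - D
  have hsplit : -(t • J) = -(t • D) + -(t • N) := by
    simp only [N, smul_sub]
    abel
  have hcomm : Commute (-(t • D)) (-(t • N)) :=
    ((hJ.commute_diagonal_diag.sub_right (Commute.refl D)).smul_left t
      |>.smul_right t).neg_left.neg_right
  have hD : ‖NormedSpace.exp (-(t • D))‖ ≤ Real.exp (-(κ * t)) := by
    rw [← diagonal_smul, diagonal_neg]
    refine l2_opNorm_exp_diagonal_le fun i => ?_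
    simp only [Pi.smul_apply, diag_apply, Complex.neg_re, Complex.real_smul,
      Complex.re_ofReal_mul]
    nlinarith [hκ i]
  have hN : ‖NormedSpace.exp (-(t • N))‖ ≤ Real.exp t := by
    refine (NormedSpace.norm_exp_le_exp_norm (𝕂 := ℂ) l2_opNorm_one_le _).trans ?_
    rw [Real.exp_le_exp, norm_neg, norm_smul, Real.norm_of_nonneg ht]
    exact mul_le_of_le_one_right ht hJ.l2_opNorm_sub_diagonal_diag_le_one
  calc ‖NormedSpace.exp (-(t • J))‖
        = ‖NormedSpace.exp (-(t • D)) * NormedSpace.exp (-(t • N))‖ := by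
          rw [hsplit, exp_add_of_commute _ _ hcomm]
    _ ≤ ‖NormedSpace.exp (-(t • D))‖ * ‖NormedSpace.exp (-(t • N))‖ := norm_mul_le _ _
    _ ≤ Real.exp (-(κ * t)) * Real.exp t := mul_le_mul hD hN (norm_nonneg _) (Real.exp_pos _).le
    _ = Real.exp ((1 - κ) * t) := by rw [← Real.exp_add]; ring_nf

end IsJordanNF

/-- Lemma 5.2 (estimate `|e^{-A₀ t}| ≤ √(κ̄(QQᴴ)/κ̲(QQᴴ)) e^{(1-κ'(A₀))t}`). -/
theorem matrix_exp_neg_opNorm_le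
    {d : ℕ} (hd : 1 ≤ d)
    (A₀ : Matrix (Fin d) (Fin d) ℝ) (Q J : Matrix (Fin d) (Fin d) ℂ)
    (hQ : IsUnit Q) (hJ : IsJordanNF J)
    (hA : A₀.map (Complex.ofReal) = Q * J * Q⁻¹)
    (κ' κlo κhi : ℝ)
    (hκ' : κ' = sInf {r : ℝ | ∃ i : Fin d, r = (J i i).re})
    (hM : (Q * Qᴴ).IsHermitian)
    (hκlo : κlo = sInf {r : ℝ | ∃ i : Fin d, r = hM.eigenvalues i})
    (hκhi : κhi = sSup {r : ℝ | ∃ i : Fin d, r = hM.eigenvalues i})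
    (t : ℝ) (ht : 0 ≤ t) :
    ‖Matrix.toEuclideanCLM (𝕜 := ℝ) (NormedSpace.exp (-(t • A₀)))‖ ≤
      Real.sqrt (κhi / κlo) * Real.exp ((1 - κ') * t) := by
  have : Nonempty (Fin d) := Fin.pos_iff_nonempty.mp hd
  have hrange (f : Fin d → ℝ) : {r : ℝ | ∃ i, r = f i} = Set.range f :=
    Set.ext fun _ => exists_congr fun _ => eq_comm
  rw [hrange] at hκ' hκlo hκhi
  have hκ'_le (i : Fin d) : κ' ≤ (J i i).re :=
    hκ' ▸ csInf_le (Set.finite_range _).bddBelow (Set.mem_range_self i)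
  have hκlo_le (i : Fin d) : κlo ≤ hM.eigenvalues i :=
    hκlo ▸ csInf_le (Set.finite_range _).bddBelow (Set.mem_range_self i)
  have hκhi_ge (i : Fin d) : hM.eigenvalues i ≤ κhi :=
    hκhi ▸ le_csSup (Set.finite_range _).bddAbove (Set.mem_range_self i)
  have hκlo_pos : 0 < κlo := by
    obtain ⟨i, hi⟩ : κlo ∈ Set.range hM.eigenvalues :=
      hκlo ▸ (Set.range_nonempty _).csInf_mem (Set.finite_range _)
    exact hi ▸ hM.eigenvalues_pos_of_isUnit hQ i
  have hconj : (-(t • A₀)).map ((↑) : ℝ → ℂ) = Q * -(t • J) * Q⁻¹ := by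
    rw [Matrix.mul_neg, Matrix.neg_mul, Matrix.mul_smul, Matrix.smul_mul, ← hA]
    ext
    simp
  calc ‖NormedSpace.exp (-(t • A₀))‖
      ≤ ‖(NormedSpace.exp (-(t • A₀))).map ((↑) : ℝ → ℂ)‖ :=
        Matrix.l2_opNorm_le_l2_opNorm_map_ofReal _
    _ = ‖Q * NormedSpace.exp (-(t • J)) * Q⁻¹‖ := by
        rw [← Matrix.exp_map_ofReal, hconj, Matrix.exp_conj _ _ hQ]
    _ ≤ ‖Q‖ * ‖Q⁻¹‖ * ‖NormedSpace.exp (-(t • J))‖ := by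
        refine (norm_mul₃_le ..).trans_eq ?_
        ring
    _ ≤ √(κhi / κlo) * Real.exp ((1 - κ') * t) := by
        gcongr
        · exact Matrix.l2_opNorm_mul_l2_opNorm_inv_le hM hκlo_pos hκlo_le hκhi_ge
        · exact hJ.l2_opNorm_exp_neg_smul_le ht hκ'_le
end

section
/- Let H be a real inner product space, let A, T : H → H be linear maps, and let λ₀ > 0, λ₁ ∈ ℝ, λ₂ > 0, λ₃ ≥ 0. Assume the anti-monotonicity inequality: for every η ∈ H, λ₀⟨Aη, η⟩ + λ₁⟨Tη, η⟩ + ‖Aη‖² + λ₂‖Tη‖² − λ₃‖η‖² ≤ 0. Then for every η ∈ H: ‖Tη‖ ≤ C‖η‖, where C := (|λ₁| + √(λ₁² + λ₂λ₀² + 4λ₂λ₃)) / (2λ₂). -/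
/-!
Cauchy–Schwarz bounds `λ₁⟪Tη, η⟫` from below by `-|λ₁| ‖Tη‖ ‖η‖`, and completing the square
`‖Aη + (λ₀/2) η‖² ≥ 0` bounds `λ₀⟪Aη, η⟫ + ‖Aη‖²` from below by `-(λ₀²/4) ‖η‖²`. The hypothesis
then says that `t = ‖Tη‖` satisfies the quadratic inequality
`λ₂ t² - |λ₁| ‖η‖ t - (λ₃ + λ₀²/4) ‖η‖² ≤ 0`, so `t` lies below the larger root, which is `C ‖η‖`.
-/

open Real

theorem le_root_mul_of_quadratic_nonpos {p q r t s : ℝ} (hp : 0 < p) (hs : 0 ≤ s)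
    (h : p * t ^ 2 - q * t * s - r * s ^ 2 ≤ 0) :
    t ≤ (q + √(q ^ 2 + 4 * p * r)) / (2 * p) * s := by
  have hsq : (2 * p * t - q * s) ^ 2 ≤ (q ^ 2 + 4 * p * r) * s ^ 2 := by
    have hid : (2 * p * t - q * s) ^ 2 - (q ^ 2 + 4 * p * r) * s ^ 2
        = 4 * p * (p * t ^ 2 - q * t * s - r * s ^ 2) := by ring
    linarith [mul_nonpos_of_nonneg_of_nonpos (by positivity : (0 : ℝ) ≤ 4 * p) h]
  have hroot : 2 * p * t - q * s ≤ √(q ^ 2 + 4 * p * r) * s :=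
    calc 2 * p * t - q * s ≤ |2 * p * t - q * s| := le_abs_self _
      _ = √((2 * p * t - q * s) ^ 2) := (sqrt_sq_eq_abs _).symm
      _ ≤ √((q ^ 2 + 4 * p * r) * s ^ 2) := sqrt_le_sqrt hsq
      _ = √(q ^ 2 + 4 * p * r) * s := by rw [sqrt_mul' _ (sq_nonneg s), sqrt_sq hs]
  rw [div_mul_eq_mul_div, le_div_iff₀ (by positivity)]
  linarith

section InnerProductSpace

variable {H : Type*} [NormedAddCommGroup H] [InnerProductSpace ℝ H]

theorem neg_abs_mul_norm_mul_norm_le_mul_inner (c : ℝ) (x y : H) :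
    -(|c| * ‖x‖ * ‖y‖) ≤ c * inner ℝ x y := by
  have hcs : |c * inner ℝ x y| ≤ |c| * ‖x‖ * ‖y‖ := by
    rw [abs_mul, mul_assoc]
    exact mul_le_mul_of_nonneg_left (abs_real_inner_le_norm x y) (abs_nonneg c)
  linarith [neg_abs_le (c * inner ℝ x y)]

theorem neg_sq_div_four_mul_norm_sq_le_mul_inner_add_norm_sq (c : ℝ) (x y : H) :
    -(c ^ 2 / 4 * ‖x‖ ^ 2) ≤ c * inner ℝ y x + ‖y‖ ^ 2 := by
  have hsq : ‖y + (c / 2) • x‖ ^ 2 = ‖y‖ ^ 2 + c * inner ℝ y x + c ^ 2 / 4 * ‖x‖ ^ 2 := by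
    rw [norm_add_sq_real, inner_smul_right, norm_smul, mul_pow, Real.norm_eq_abs, sq_abs]
    ring
  linarith [sq_nonneg ‖y + (c / 2) • x‖]

end InnerProductSpace

theorem antiMonotone_implies_lipschitz_general
    {H : Type*} [NormedAddCommGroup H] [InnerProductSpace ℝ H]
    (A T : H →ₗ[ℝ] H) (l0 l1 l2 l3 : ℝ)
    (h2 : 0 < l2)
    (hanti : ∀ η : H,
      l0 * (inner ℝ (A η) η : ℝ) + l1 * (inner ℝ (T η) η : ℝ) +
        ‖A η‖ ^ 2 + l2 * ‖T η‖ ^ 2 - l3 * ‖η‖ ^ 2 ≤ 0)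
    (η : H) :
    ‖T η‖ ≤ (|l1| + Real.sqrt (l1 ^ 2 + l2 * l0 ^ 2 + 4 * l2 * l3)) / (2 * l2) * ‖η‖ := by
  have hA := neg_sq_div_four_mul_norm_sq_le_mul_inner_add_norm_sq l0 η (A η)
  have hT := neg_abs_mul_norm_mul_norm_le_mul_inner l1 (T η) η
  have hquad : l2 * ‖T η‖ ^ 2 - |l1| * ‖T η‖ * ‖η‖ - (l3 + l0 ^ 2 / 4) * ‖η‖ ^ 2 ≤ 0 := by
    linarith [hanti η]
  have hdisc : |l1| ^ 2 + 4 * l2 * (l3 + l0 ^ 2 / 4) = l1 ^ 2 + l2 * l0 ^ 2 + 4 * l2 * l3 := by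
    rw [sq_abs]; ring
  simpa only [hdisc] using le_root_mul_of_quadratic_nonpos h2 (norm_nonneg η) hquad

/-- If linear maps `A, T` on a real inner product space satisfy the anti-monotonicity
inequality `λ₀⟨Aη,η⟩ + λ₁⟨Tη,η⟩ + ‖Aη‖² + λ₂‖Tη‖² - λ₃‖η‖² ≤ 0` for all `η`, then
`‖Tη‖ ≤ C‖η‖` with `C = (|λ₁| + √(λ₁² + λ₂λ₀² + 4λ₂λ₃))/(2λ₂)`. -/
theorem antiMonotone_implies_lipschitz
    {H : Type*} [NormedAddCommGroup H] [InnerProductSpace ℝ H]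
    (A T : H →ₗ[ℝ] H) (l0 l1 l2 l3 : ℝ)
    (h0 : 0 < l0) (h2 : 0 < l2) (h3 : 0 ≤ l3)
    (hanti : ∀ η : H,
      l0 * (inner ℝ (A η) η : ℝ) + l1 * (inner ℝ (T η) η : ℝ) +
        ‖A η‖ ^ 2 + l2 * ‖T η‖ ^ 2 - l3 * ‖η‖ ^ 2 ≤ 0)
    (η : H) :
    ‖T η‖ ≤ (|l1| + Real.sqrt (l1 ^ 2 + l2 * l0 ^ 2 + 4 * l2 * l3)) / (2 * l2) * ‖η‖ :=
  antiMonotone_implies_lipschitz_general A T l0 l1 l2 l3 h2 hanti η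
end

section
/- Let a, b > 0 and k ≥ 1, set θ₃ := 1 + a·k·(1 + b·k + √((1 + b·k)² − 1)), and for θ ≥ θ₃ define L(θ) := (θ − 1 − a·k − √((θ − 1 − a·k)² − 2·a·b·k²·(θ − 1))) / (a·k). Then L is strictly decreasing on [θ₃, ∞): for all θ₃ ≤ θ < θ', L(θ') < L(θ). -/
/-!
Put `u = θ - 1 - ak - abk²` and `w = ak√((1 + bk)² - 1)`. Completing the square turns the
radicand into `u² - w²`, so that `ak · L(θ) = u - √(u² - w²) + abk²`, and `θ = θ₃` is exactly
`u = w`. On `u ≥ w > 0` we have `u - √(u² - w²) = w² / (u + √(u² - w²))`, whose denominator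
is strictly increasing in `u`.
-/

open Real Set

lemma sub_sqrt_sq_sub_sq_eq_div {u w : ℝ} (hw : 0 < w) (hwu : w ≤ u) :
    u - √(u ^ 2 - w ^ 2) = w ^ 2 / (u + √(u ^ 2 - w ^ 2)) := by
  have hden : 0 < u + √(u ^ 2 - w ^ 2) := add_pos_of_pos_of_nonneg (hw.trans_le hwu) (sqrt_nonneg _)
  have hsq : √(u ^ 2 - w ^ 2) ^ 2 = u ^ 2 - w ^ 2 := sq_sqrt (by nlinarith)
  rw [eq_div_iff hden.ne']
  linear_combination -hsq

theorem strictAntiOn_sub_sqrt_sq_sub_sq {w : ℝ} (hw : 0 < w) :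
    StrictAntiOn (fun u => u - √(u ^ 2 - w ^ 2)) (Ici w) := by
  intro u (hu : w ≤ u) v (hv : w ≤ v) huv
  have hsqrt : √(u ^ 2 - w ^ 2) ≤ √(v ^ 2 - w ^ 2) := sqrt_le_sqrt (by nlinarith)
  simp only [sub_sqrt_sq_sub_sq_eq_div hw hu, sub_sqrt_sq_sub_sq_eq_div hw hv]
  exact div_lt_div_of_pos_left (by positivity)
    (add_pos_of_pos_of_nonneg (hw.trans_le hu) (sqrt_nonneg _)) (by linarith)

/-- The a priori bound `L(θ) = (θ - 1 - ak - √((θ - 1 - ak)² - 2abk²(θ - 1)))/(ak)` is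
strictly decreasing on `[θ₃, ∞)`, where `θ₃ = 1 + ak(1 + bk + √((1 + bk)² - 1))`. -/
theorem apriori_bound_strict_anti
    (a b k : ℝ) (ha : 0 < a) (hb : 0 < b) (hk : 1 ≤ k)
    (θ₃ : ℝ) (hθ₃ : θ₃ = 1 + a * k * (1 + b * k + Real.sqrt ((1 + b * k) ^ 2 - 1)))
    (L : ℝ → ℝ)
    (hL : ∀ θ : ℝ, L θ =
      (θ - 1 - a * k - Real.sqrt ((θ - 1 - a * k) ^ 2 - 2 * a * b * k ^ 2 * (θ - 1))) / (a * k)) :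
    ∀ θ θ' : ℝ, θ₃ ≤ θ → θ < θ' → L θ' < L θ := by
  intro θ θ' hθ hθθ'
  have hk0 : 0 < k := by linarith
  set r := √((1 + b * k) ^ 2 - 1)
  have hr2 : r ^ 2 = (1 + b * k) ^ 2 - 1 := sq_sqrt (by nlinarith [mul_pos hb hk0])
  have hw : 0 < a * k * r := by
    have : 0 < r := sqrt_pos.2 (by nlinarith [mul_pos hb hk0])
    positivity
  have hL' : ∀ θ, L θ = ((θ - 1 - a * k - a * b * k ^ 2)
      - √((θ - 1 - a * k - a * b * k ^ 2) ^ 2 - (a * k * r) ^ 2) + a * b * k ^ 2) / (a * k) := by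
    intro θ
    have hrad : (θ - 1 - a * k) ^ 2 - 2 * a * b * k ^ 2 * (θ - 1)
        = (θ - 1 - a * k - a * b * k ^ 2) ^ 2 - (a * k * r) ^ 2 := by
      linear_combination (a * k) ^ 2 * hr2
    rw [hL, hrad]
    ring
  have hstart : a * k * r ≤ θ - 1 - a * k - a * b * k ^ 2 := by
    rw [hθ₃] at hθ
    linear_combination hθ
  rw [hL', hL']
  gcongr ?_ / _
  exact add_lt_add_left (strictAntiOn_sub_sqrt_sq_sub_sq hw hstart (by simp only [mem_Ici]; linarith)
    (by linarith)) _
end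

section
/- Let a, b > 0 and k ≥ 1, set θ₃ := 1 + a·k·(1 + b·k + √((1 + b·k)² − 1)), and for θ ≥ θ₃ let L₀ := (θ − 1 − a·k − √((θ − 1 − a·k)² − 2·a·b·k²·(θ − 1))) / (a·k). Then 2(θ − 1) − a·k·(2 + L₀) > 0 and L₀ · (2(θ − 1) − a·k·(2 + L₀)) = 2·b·k·(θ − 1); equivalently, b·k + (a·b·k²·(2 + L₀)) / (2(θ − 1) − a·k·(2 + L₀)) = L₀. -/
/-!
Write `c = θ - 1`, `p = ak`, `q = bk`. The number `pL₀ = (c - p) - √((c - p)² - 2pqc)` is the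
smaller root of `x² - 2(c - p)x + 2pqc`, so `L₀(2(c - p) - pL₀) = 2qc`, and
`2c - p(2 + L₀) = (c - p) + √(…)` is positive. The threshold `θ₃` is exactly what makes the
discriminant nonnegative: `(c - p)² - 2pqc = (c - p(1 + q))² - p²((1 + q)² - 1)`, and
`θ ≥ θ₃` says `c - p(1 + q) ≥ p√((1 + q)² - 1)`.
-/

open Real

section SmallerRoot

variable {p m r : ℝ}

theorem two_mul_sub_mul_smallerRoot (hp : p ≠ 0) :
    2 * m - p * ((m - √(m ^ 2 - p * r)) / p) = m + √(m ^ 2 - p * r) := by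
  field_simp
  ring

theorem smallerRoot_mul_two_mul_sub (hp : p ≠ 0) (hD : 0 ≤ m ^ 2 - p * r) :
    (m - √(m ^ 2 - p * r)) / p * (2 * m - p * ((m - √(m ^ 2 - p * r)) / p)) = r := by
  rw [two_mul_sub_mul_smallerRoot hp, div_mul_eq_mul_div, div_eq_iff hp]
  linear_combination (-1 : ℝ) * sq_sqrt hD

end SmallerRoot

section Threshold

variable {p q c : ℝ}

theorem discriminant_nonneg_of_threshold_le (hp : 0 ≤ p) (hq : 0 ≤ q)
    (hc : p * (1 + q + √((1 + q) ^ 2 - 1)) ≤ c) :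
    0 ≤ (c - p) ^ 2 - p * (2 * q * c) := by
  have he : √((1 + q) ^ 2 - 1) ^ 2 = (1 + q) ^ 2 - 1 := sq_sqrt (by nlinarith)
  have hsq : (p * √((1 + q) ^ 2 - 1)) ^ 2 ≤ (c - p * (1 + q)) ^ 2 :=
    pow_le_pow_left₀ (by positivity) (by linarith) 2
  linear_combination hsq - p ^ 2 * he

theorem sub_pos_of_threshold_le (hp : 0 < p) (hq : 0 < q)
    (hc : p * (1 + q + √((1 + q) ^ 2 - 1)) ≤ c) : 0 < c - p := by
  have : 0 ≤ p * √((1 + q) ^ 2 - 1) := by positivity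
  nlinarith [mul_pos hp hq]

end Threshold

theorem add_div_eq_of_mul_eq {p q c L : ℝ} (hP : 2 * c - p * (2 + L) ≠ 0)
    (h : L * (2 * c - p * (2 + L)) = 2 * q * c) :
    q + p * q * (2 + L) / (2 * c - p * (2 + L)) = L := by
  rw [add_div' _ _ _ hP, div_eq_iff hP]
  linear_combination -h

/-- The fixed-point identity satisfied by the a priori bound
`L₀ = (θ - 1 - ak - √((θ - 1 - ak)² - 2abk²(θ - 1)))/(ak)` for `θ ≥ θ₃`:
`2(θ-1) - ak(2+L₀) > 0`, `L₀(2(θ-1) - ak(2+L₀)) = 2bk(θ-1)`, and equivalently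
`bk + abk²(2+L₀)/(2(θ-1) - ak(2+L₀)) = L₀`. -/
theorem apriori_bound_fixed_point
    (a b k θ : ℝ) (ha : 0 < a) (hb : 0 < b) (hk : 1 ≤ k)
    (θ₃ : ℝ) (hθ₃ : θ₃ = 1 + a * k * (1 + b * k + Real.sqrt ((1 + b * k) ^ 2 - 1)))
    (hθ : θ₃ ≤ θ) (L₀ : ℝ)
    (hL₀ : L₀ =
      (θ - 1 - a * k -
        Real.sqrt ((θ - 1 - a * k) ^ 2 - 2 * a * b * k ^ 2 * (θ - 1))) / (a * k)) :
    0 < 2 * (θ - 1) - a * k * (2 + L₀) ∧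
    L₀ * (2 * (θ - 1) - a * k * (2 + L₀)) = 2 * b * k * (θ - 1) ∧
    b * k + a * b * k ^ 2 * (2 + L₀) / (2 * (θ - 1) - a * k * (2 + L₀)) = L₀ := by
  have hp : 0 < a * k := mul_pos ha (by linarith)
  have hq : 0 < b * k := mul_pos hb (by linarith)
  have hc : a * k * (1 + b * k + √((1 + b * k) ^ 2 - 1)) ≤ θ - 1 := by linarith
  rw [show 2 * a * b * k ^ 2 * (θ - 1) = a * k * (2 * (b * k) * (θ - 1)) by ring] at hL₀
  have hP : 2 * (θ - 1) - a * k * (2 + L₀) = 2 * (θ - 1 - a * k) - a * k * L₀ := by ring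
  have hPpos : 0 < 2 * (θ - 1) - a * k * (2 + L₀) := by
    rw [hP, hL₀, two_mul_sub_mul_smallerRoot hp.ne']
    have := sub_pos_of_threshold_le hp hq hc
    positivity
  have hprod : L₀ * (2 * (θ - 1) - a * k * (2 + L₀)) = 2 * b * k * (θ - 1) := by
    have hD := discriminant_nonneg_of_threshold_le hp.le hq.le hc
    rw [hP, hL₀, smallerRoot_mul_two_mul_sub hp.ne' hD]
    ring
  refine ⟨hPpos, hprod, ?_⟩
  rw [show a * b * k ^ 2 = a * k * (b * k) by ring]
  exact add_div_eq_of_mul_eq hPpos.ne' (by linear_combination hprod)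
end
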